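/- For every topological space Y, the coreflection arrow νY → Y (the identity map from Y retopologized with the numerically generated topology to Y) is a weak homotopy equivalence: it induces a bijection on path components and isomorphisms πₙ(νY, y) → πₙ(Y, y) on all homotopy groups for all n ≥ 1 and all basepoints y. -/

import Mathlib

open CategoryTheory CategoryTheory.Limits Topology

universe w v u

namespace Paper


/-! ### Numerically generated (Δ-generated) spaces -/

/-- A subset `U` of a topological space `X` is numerically open if for every continuous
map `P : V → X` from an open subset `V` of a Euclidean space, `P ⁻¹' U` is open. -/
def NumericallyOpen {X : Type u} [TopologicalSpace X] (U : Set X) : Prop :=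
  ∀ (n : ℕ) (V : Set (EuclideanSpace ℝ (Fin n))), IsOpen V → ∀ P : C(V, X), IsOpen (⇑P ⁻¹' U)

/-- The topology on (the underlying set of) `X` whose open sets are the numerically
open subsets of `X`; this is the coreflection `ν X`. -/
def nuTop (X : Type u) [TopologicalSpace X] : TopologicalSpace X where
  IsOpen U := NumericallyOpen U
  isOpen_univ := fun _ _ _ P => by simp
  isOpen_inter := fun U₁ U₂ h₁ h₂ n V hV P => by
    rw [Set.preimage_inter]; exact (h₁ n V hV P).inter (h₂ n V hV P)
  isOpen_sUnion := fun S hS n V hV P => by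
    rw [Set.preimage_sUnion]; exact isOpen_biUnion fun U hU => hS U hU n V hV P

/-- A space is numerically generated (equivalently, Δ-generated) if every numerically
open subset is open. -/
def IsNumericallyGenerated (X : Type u) [TopologicalSpace X] : Prop :=
  ∀ U : Set X, NumericallyOpen U → IsOpen U

lemma isOpen_nuTop_iff {X : Type u} [TopologicalSpace X] {U : Set X} :
    IsOpen[nuTop X] U ↔ NumericallyOpen U := Iff.rfl

/-- The numerically generated topology is finer than the original topology; equivalently,
the identity `ν X → X` is continuous. -/
lemma nuTop_le (X : Type u) [t : TopologicalSpace X] : nuTop X ≤ t := by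
  intro U hU
  exact fun n V hV P => hU.preimage P.continuous

/-- Any probe is continuous into the numerically generated topology. -/
lemma continuous_probe_nuTop {X : Type u} [TopologicalSpace X] {n : ℕ}
    {V : Set (EuclideanSpace ℝ (Fin n))} (hV : IsOpen V) (P : C(V, X)) :
    @Continuous _ _ _ (nuTop X) ⇑P :=
  continuous_def.mpr fun U hU => hU n V hV P

/-- The numerically generated topology is idempotent. -/
lemma isNumericallyGenerated_nuTop (X : Type u) [TopologicalSpace X] :
    @IsNumericallyGenerated X (nuTop X) := by
  intro U hU n V hV P
  exact hU n V hV (@ContinuousMap.mk _ _ _ (nuTop X) ⇑P (continuous_probe_nuTop hV P))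

/-- Continuous maps are continuous for the numerically generated topologies. -/
lemma continuous_nuTop_map {X Y : Type u} [TopologicalSpace X] [TopologicalSpace Y]
    (f : C(X, Y)) : @Continuous _ _ (nuTop X) (nuTop Y) ⇑f := by
  rw [@continuous_def _ _ (nuTop X) (nuTop Y)]
  intro U hU n V hV P
  have : ⇑P ⁻¹' (⇑f ⁻¹' U) = ⇑(f.comp P) ⁻¹' U := rfl
  rw [this]
  exact hU n V hV (f.comp P)

end Paper

namespace Paper

/-! ### The category `NG` and the coreflection `ν` -/

/-- The category of numerically generated (Δ-generated) topological spaces,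
as a full subcategory of `Top`. -/
abbrev NGCat : Type (u + 1) :=
  ObjectProperty.FullSubcategory fun X : TopCat.{u} => IsNumericallyGenerated X

/-- The inclusion functor `i : NG → Top`. -/
abbrev ngInclusion : NGCat.{u} ⥤ TopCat.{u} :=
  ObjectProperty.ι _

/-- `X` retopologized with the numerically generated topology, as an object of `NG`. -/
def nuObj (X : TopCat.{u}) : NGCat.{u} :=
  ⟨@TopCat.of X (nuTop X), isNumericallyGenerated_nuTop X⟩

/-- The coreflection functor `ν : Top → NG`. -/
def nuFunctor : TopCat.{u} ⥤ NGCat.{u} where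
  obj X := nuObj X
  map {X Y} f := ⟨@TopCat.ofHom X Y (nuTop X) (nuTop Y)
    (@ContinuousMap.mk _ _ (nuTop X) (nuTop Y) ⇑f (continuous_nuTop_map f.hom))⟩
  map_id := fun X => rfl
  map_comp := fun f g => rfl

end Paper

namespace Paper

/-! ### Weak homotopy equivalences -/

open Topology.Homotopy in
/-- The map on generalized loops induced by a continuous map. -/
def GenLoop.comp {X Y : Type u} [TopologicalSpace X] [TopologicalSpace Y] {N : Type}
    {x : X} (f : C(X, Y)) (p : Ω^ N X x) : Ω^ N Y (f x) :=
  ⟨f.comp p.1, fun y hy => by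
    have := p.2 y hy
    simp [this]⟩

open Topology.Homotopy in
/-- The induced map `f₊ : πₙ(X, x) → πₙ(Y, f x)` on homotopy groups. -/
def HomotopyGroup.map {X Y : Type u} [TopologicalSpace X] [TopologicalSpace Y] {N : Type}
    {x : X} (f : C(X, Y)) :
    HomotopyGroup N X x → HomotopyGroup N Y (f x) :=
  Quotient.map (GenLoop.comp f)
    (fun p q h => h.elim fun H => ⟨H.compContinuousMap f⟩)

/-- A continuous map is a weak homotopy equivalence if it induces a bijection on path
components and isomorphisms on all homotopy groups `πₙ`, `n ≥ 1`, at all basepoints. -/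
structure IsWeakHomotopyEquiv {X Y : Type u} [TopologicalSpace X] [TopologicalSpace Y]
    (f : C(X, Y)) : Prop where
  surj_pi0 : ∀ y : Y, ∃ x : X, Joined (f x) y
  inj_pi0 : ∀ x₁ x₂ : X, Joined (f x₁) (f x₂) → Joined x₁ x₂
  bij_pi : ∀ n : ℕ, 1 ≤ n → ∀ x : X,
    Function.Bijective
      (HomotopyGroup.map f : HomotopyGroup (Fin n) X x → HomotopyGroup (Fin n) Y (f x))

/-- A morphism of `Top` is a weak homotopy equivalence. -/
def TopIsWeakHomotopyEquiv : MorphismProperty TopCat.{u} :=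
  fun X Y f => IsWeakHomotopyEquiv (X := X) (Y := Y) ⟨⇑f, f.hom.continuous⟩

end Paper

namespace Paper

/-! ### The generating cofibrations and trivial cofibrations of `Top` -/

/-- The `n`-sphere with an integer index, as in the older Mathlib: the unit sphere in
`ℝ^{(n+1).toNat}` (so `sphereZ (-1)` is empty). -/
noncomputable def sphereZ (n : ℤ) : TopCat.{u} :=
  TopCat.of <| ULift <| Metric.sphere (0 : EuclideanSpace ℝ <| Fin <| Int.toNat <| n + 1) 1

/-- The `n`-disk with an integer index, as in the older Mathlib. -/
noncomputable def diskZ (n : ℤ) : TopCat.{u} :=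
  TopCat.of <| ULift <| Metric.closedBall (0 : EuclideanSpace ℝ <| Fin <| Int.toNat n) 1

/-- The boundary inclusion `sphereZ n ⟶ diskZ (n + 1)`, as in the older Mathlib. -/
def sphereInclusionZ (n : ℤ) : sphereZ.{u} n ⟶ diskZ.{u} (n + 1) :=
  TopCat.ofHom
    { toFun := fun ⟨p, hp⟩ ↦ ⟨p, le_of_eq hp⟩
      continuous_toFun := ⟨fun t ⟨s, ⟨r, hro, hrs⟩, hst⟩ ↦ by
        rw [isOpen_induced_iff, ← hst, ← hrs]
        tauto⟩ }

open scoped TopCat in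
/-- The cylinder `Dⁿ × [0, 1]` on the `n`-disk. -/
noncomputable def diskCyl (n : ℕ) : TopCat.{u} :=
  TopCat.of ((diskZ.{u} (n : ℤ)) × unitInterval)

open scoped TopCat in
/-- The inclusion `Dⁿ × {0} → Dⁿ × [0, 1]`. -/
noncomputable def diskCylInclusion (n : ℕ) : diskZ (n : ℤ) ⟶ diskCyl.{u} n :=
  TopCat.ofHom ⟨fun x => (x, 0), continuous_id.prodMk continuous_const⟩

open scoped TopCat in
/-- The set `I = {Sⁿ⁻¹ → Dⁿ | n ≥ 0}` of boundary inclusions, the generating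
cofibrations of the standard model structure on `Top` (Hovey 2.4.19). -/
noncomputable def topI : MorphismProperty TopCat.{u} :=
  fun X Y f => ∃ n : ℕ, ∃ hX : X = sphereZ ((n : ℤ) - 1), ∃ hY : Y = diskZ (n : ℤ),
    f = eqToHom hX ≫ sphereInclusionZ ((n : ℤ) - 1) ≫
      eqToHom (show diskZ ((n : ℤ) - 1 + 1) = Y by rw [sub_add_cancel]; exact hY.symm)

open scoped TopCat in
/-- The set `J = {Dⁿ × {0} → Dⁿ × [0,1] | n ≥ 0}` of inclusions, the generating trivial
cofibrations of the standard model structure on `Top` (Hovey 2.4.19). -/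
noncomputable def topJ : MorphismProperty TopCat.{u} :=
  fun X Y f => ∃ n : ℕ, ∃ hX : X = diskZ (n : ℤ), ∃ hY : Y = diskCyl.{u} n,
    f = eqToHom hX ≫ diskCylInclusion n ≫ eqToHom hY.symm

/-! Composing a map `f : Z → Y` with a retraction of a Euclidean space onto `Z` gives a probe,
so `f` is continuous into `ν Y`. Paths, the cubes `Iⁿ` and the cylinders `I × Iⁿ` are such
retracts, hence every path in `Y`, every representative of a class in `πₙ(Y, y)` and every
homotopy between such representatives is already continuous into `ν Y`, and the identity
`ν Y → Y` induces bijections on `π₀` and on every `πₙ`. -/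

open unitInterval

def Nu (Y : Type u) [TopologicalSpace Y] : Type u := Y

instance (Y : Type u) [TopologicalSpace Y] : TopologicalSpace (Nu Y) := nuTop Y

def nuCounit (Y : Type u) [TopologicalSpace Y] : C(Nu Y, Y) :=
  ⟨id, continuous_id_iff_le.mpr (nuTop_le Y)⟩

attribute [local fun_prop] continuous_projIcc

section

variable {Y : Type u} [TopologicalSpace Y]

theorem continuous_nuTop_of_leftInverse {E : Type} [NormedAddCommGroup E] [NormedSpace ℝ E]
    [FiniteDimensional ℝ E] {Z : Type} [TopologicalSpace Z] {e : Z → E} {r : E → Z}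
    (he : Continuous e) (hr : Continuous r) (hre : Function.LeftInverse r e) {f : Z → Y}
    (hf : Continuous f) : Continuous[_, nuTop Y] f := by
  let φ : E ≃L[ℝ] EuclideanSpace ℝ (Fin (Module.finrank ℝ E)) :=
    ContinuousLinearEquiv.ofFinrankEq finrank_euclideanSpace_fin.symm
  let P : C((Set.univ : Set (EuclideanSpace ℝ (Fin (Module.finrank ℝ E)))), Y) :=
    ⟨fun v => f (r (φ.symm v)), by fun_prop⟩
  have hfP : f = P ∘ fun z => ⟨φ (e z), trivial⟩ := funext fun z => by simp [P, hre z]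
  have hP : Continuous (Y := Nu Y) P := continuous_probe_nuTop isOpen_univ P
  rw [hfP]
  exact hP.comp (by fun_prop)

theorem continuous_nuTop_of_unitInterval {f : I → Y} (hf : Continuous f) :
    Continuous[_, nuTop Y] f :=
  continuous_nuTop_of_leftInverse continuous_subtype_val continuous_projIcc
    (Set.projIcc_val zero_le_one) hf

theorem continuous_nuTop_of_cube {N : Type} [Fintype N] {f : (N → I) → Y} (hf : Continuous f) :
    Continuous[_, nuTop Y] f :=
  continuous_nuTop_of_leftInverse (e := fun x i => (x i : ℝ))
    (r := fun v i => Set.projIcc 0 1 zero_le_one (v i)) (by fun_prop) (by fun_prop)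
    (fun x => funext fun i => Set.projIcc_val zero_le_one (x i)) hf

theorem continuous_nuTop_of_cylinder {N : Type} [Fintype N] {f : I × (N → I) → Y}
    (hf : Continuous f) : Continuous[_, nuTop Y] f :=
  continuous_nuTop_of_leftInverse (e := fun p => ((p.1 : ℝ), fun i => (p.2 i : ℝ)))
    (r := fun v => (Set.projIcc 0 1 zero_le_one v.1, fun i => Set.projIcc 0 1 zero_le_one (v.2 i)))
    (by fun_prop) (by fun_prop)
    (fun p => Prod.ext (Set.projIcc_val zero_le_one p.1)
      (funext fun i => Set.projIcc_val zero_le_one (p.2 i))) hf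

theorem joined_nu_of_joined {x y : Y} (h : Joined x y) : Joined (X := Nu Y) x y := by
  obtain ⟨γ⟩ := h
  exact ⟨⟨⟨γ, continuous_nuTop_of_unitInterval (Y := Y) γ.continuous⟩, γ.source, γ.target⟩⟩

theorem homotopicRel_of_nuCounit_comp {N : Type} [Fintype N] {S : Set (N → I)} {p q : C(N → I, Nu Y)}
    (h : ((nuCounit Y).comp p).HomotopicRel ((nuCounit Y).comp q) S) : p.HomotopicRel q S := by
  obtain ⟨H⟩ := h
  exact ⟨⟨⟨⟨H, continuous_nuTop_of_cylinder (Y := Y) H.continuous⟩, H.apply_zero, H.apply_one⟩,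
    H.prop'⟩⟩

theorem bijective_homotopyGroupMap_nuCounit (N : Type) [Fintype N] (x : Nu Y) :
    Function.Bijective
      (HomotopyGroup.map (nuCounit Y) : HomotopyGroup N (Nu Y) x → HomotopyGroup N Y x) := by
  constructor
  · rintro ⟨p⟩ ⟨q⟩ h
    exact Quotient.sound (homotopicRel_of_nuCounit_comp (Quotient.exact h))
  · rintro ⟨p⟩
    exact ⟨⟦⟨⟨p, continuous_nuTop_of_cube (Y := Y) p.1.continuous⟩, p.2⟩⟧, rfl⟩

end

/-- For every topological space `Y`, the coreflection arrow `ν Y → Y`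
(the identity map of `Y`, from the numerically generated topology to the original one)
is a weak homotopy equivalence. -/
theorem nu_counit_is_weak_homotopy_equiv (Y : Type u) [t : TopologicalSpace Y] :
    @IsWeakHomotopyEquiv Y Y (nuTop Y) t
      (@ContinuousMap.mk _ _ (nuTop Y) t id (continuous_id_iff_le.mpr (nuTop_le Y))) :=
  @IsWeakHomotopyEquiv.mk Y Y (nuTop Y) t _ (fun y => ⟨y, Joined.refl y⟩) (fun _ _ => joined_nu_of_joined)
    fun n _ => bijective_homotopyGroupMap_nuCounit (Fin n)

end Paper
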